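/- Suppose d_k ≥ d_k^r for every k ∈ V_R, and there exists a vertex i ∈ V_R with d_i > d_i^r that recruited at least one other vertex (i.e., there is k ∈ V_R with (i,k) ∈ E_R). Then the subgraph preferential recruitment is not point identified: there exist two compatible pairs (G¹_SU, Z¹_SU) and (G²_SU, Z²_SU) with p(G¹_SU, Z¹_SU) ≠ p(G²_SU, Z²_SU). -/

import Mathlib

/-
Complete the recruitment graph by attaching `d_v - d_v^r` pendant unsampled vertices to every
sampled vertex `v`; this graph is compatible with the data whatever traits the new vertices carry.
Let `u` be a pendant vertex of `i`. Its only neighbour is `i`, so it is susceptible only in the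
terms with `r_j = i`, among them the term of the recruit `k` of `i`. Giving `u` the trait of `i`
rather than the opposite one raises `same(i, S_i(t_j))` by one in each of these terms and changes
nothing else, so it strictly lowers `p`.
-/

open Finset

namespace RDS

/-- Edge sets of finite undirected simple graphs on the ambient vertex type `ℕ`. -/
abbrev Edges := Finset (Sym2 ℕ)

instance (VR : Finset ℕ) : DecidablePred (fun e : Sym2 ℕ => ∀ v ∈ e, v ∈ VR) :=
  fun _ => decidable_of_iff _ Finset.mem_sym2_iff

instance (VR : Finset ℕ) : DecidablePred (fun e : Sym2 ℕ => ∃ v ∈ e, v ∈ VR) :=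
  fun e => decidable_of_iff (∃ v ∈ VR, v ∈ e) (by tauto)

instance (VR : Finset ℕ) : DecidablePred (fun e : Sym2 ℕ => ∃ v ∈ e, v ∉ VR) :=
  fun e => decidable_of_iff (¬ ∀ v ∈ e, v ∈ VR) (by simp)

/-- Degree of `i` in an edge set: number of edges containing `i`. -/
def degE (E : Edges) (i : ℕ) : ℕ := (E.filter (fun e => i ∈ e)).card

/-- Edge set of the undirected graph underlying the directed recruitment graph `E_R`. -/
def uRec (ER : Finset (ℕ × ℕ)) : Edges := ER.image (fun p => s(p.1, p.2))

/-- Degree of `i` in the undirected graph underlying the recruitment graph (`d_i^r`). -/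
def dRec (ER : Finset (ℕ × ℕ)) (i : ℕ) : ℕ := degE (uRec ER) i

/-- Compatibility of an augmented recruitment-induced subgraph `(V_SU, E_SU, Z_SU)`
with the observed RDS data `(G_R, d_R, Z_R)`. -/
structure Compat (VR : Finset ℕ) (ER : Finset (ℕ × ℕ)) (d : ℕ → ℕ) (ZR : ℕ → Bool)
    (VSU : Finset ℕ) (ESU : Edges) (Z : ℕ → Bool) : Prop where
  loopless : ∀ e ∈ ESU, ¬ e.IsDiag
  vr_subset : VR ⊆ VSU
  edges_subset : ∀ e ∈ ESU, ∀ v ∈ e, v ∈ VSU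
  er_subset : ∀ p ∈ ER, s(p.1, p.2) ∈ ESU
  trait_agree : ∀ i ∈ VR, Z i = ZR i
  covered : ∀ u ∈ VSU, u ∉ VR → ∃ v ∈ VR, s(u, v) ∈ ESU
  no_unsampled_edge : ∀ e ∈ ESU, ∃ v ∈ e, v ∈ VR
  degree_eq : ∀ i ∈ VR, degE ESU i = d i

/-- `S_i(t_j)`: susceptible neighbors of `i` (within the vertex set `Vfin`, w.r.t. the
edge set `E`) just before the recruitment of `j`: neighbors outside `V_R` together with
non-seed neighbors in `V_R` whose recruitment label is `≥ j`. -/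
def Ssusc (Vfin VR M : Finset ℕ) (E : Edges) (i j : ℕ) : Finset ℕ :=
  Vfin.filter (fun k => s(i, k) ∈ E ∧ (k ∉ VR ∨ (k ∈ VR ∧ k ∉ M ∧ j ≤ k)))

/-- `same(i, S)`: the number of elements of `S` sharing the trait of `i`. -/
def same (Z : ℕ → Bool) (i : ℕ) (S : Finset ℕ) : ℕ := (S.filter (fun k => Z k = Z i)).card

/-- Subgraph preferential recruitment
`p = (1/(n−|M|)) ∑_{j ∈ V_R \ M} (Y_j − same(r_j, S_{r_j}(t_j)) / |S_{r_j}(t_j)|)`. -/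
noncomputable def prefRec (Vfin VR M : Finset ℕ) (E : Edges) (Z : ℕ → Bool) (r : ℕ → ℕ) : ℝ :=
  (∑ j ∈ VR \ M, ((if Z j = Z (r j) then (1 : ℝ) else 0)
      - (same Z (r j) (Ssusc Vfin VR M E (r j) j) : ℝ) / ((Ssusc Vfin VR M E (r j) j).card : ℝ)))
    / (((VR \ M).card : ℝ))

open Function

lemma same_update_of_notMem {Z : ℕ → Bool} {x u : ℕ} {S : Finset ℕ} (b : Bool)
    (hx : x ≠ u) (hu : u ∉ S) : same (update Z u b) x S = same Z x S := by
  unfold same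
  congr 1
  refine Finset.filter_congr fun k hk => ?_
  rw [update_of_ne (ne_of_mem_of_not_mem hk hu), update_of_ne hx]

lemma same_update_of_mem {Z : ℕ → Bool} {x u : ℕ} {S : Finset ℕ} (b : Bool)
    (hx : x ≠ u) (hu : u ∈ S) :
    same (update Z u b) x S = same Z x (S.erase u) + if b = Z x then 1 else 0 := by
  rw [same, same, Finset.card_filter, Finset.card_filter, ← Finset.sum_erase_add S _ hu,
    update_self, update_of_ne hx]
  congr 1
  refine Finset.sum_congr rfl fun k hk => ?_
  rw [update_of_ne (Finset.ne_of_mem_erase hk)]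

lemma same_update_self (Z : ℕ → Bool) {x u : ℕ} (S : Finset ℕ) (hx : x ≠ u) :
    same (update Z u (Z x)) x S = same (update Z u (!Z x)) x S + if u ∈ S then 1 else 0 := by
  by_cases hu : u ∈ S
  · simp [same_update_of_mem _ hx hu, hu]
  · simp [same_update_of_notMem _ hx hu, hu]

theorem prefRec_update_lt {Vfin VR M : Finset ℕ} {E : Edges} (Z : ℕ → Bool) {r : ℕ → ℕ}
    {c u j₀ : ℕ} (hu : u ∉ VR) (hr : ∀ j ∈ VR \ M, r j ∈ VR)
    (hnbr : ∀ x, s(x, u) ∈ E → x = c)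
    (hj₀ : j₀ ∈ VR \ M) (huj₀ : u ∈ Ssusc Vfin VR M E (r j₀) j₀) :
    prefRec Vfin VR M E (update Z u (Z c)) r < prefRec Vfin VR M E (update Z u (!Z c)) r := by
  set S := fun j => Ssusc Vfin VR M E (r j) j
  have hsame : ∀ j ∈ VR \ M, same (update Z u (Z c)) (r j) (S j)
      = same (update Z u (!Z c)) (r j) (S j) + if u ∈ S j then 1 else 0 := by
    intro j hj
    have hx : r j ≠ u := ne_of_mem_of_not_mem (hr j hj) hu
    by_cases huS : u ∈ S j
    · obtain rfl : r j = c := hnbr _ (Finset.mem_filter.mp huS).2.1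
      exact same_update_self Z (S j) hx
    · rw [same_update_of_notMem _ hx huS, same_update_of_notMem _ hx huS, if_neg huS,
        add_zero]
  have hY : ∀ j ∈ VR \ M, ∀ b : Bool,
      (update Z u b j = update Z u b (r j)) ↔ (Z j = Z (r j)) := by
    intro j hj b
    rw [update_of_ne (ne_of_mem_of_not_mem (Finset.mem_sdiff.mp hj).1 hu),
      update_of_ne (ne_of_mem_of_not_mem (hr j hj) hu)]
  unfold prefRec
  refine div_lt_div_of_pos_right (Finset.sum_lt_sum (fun j hj => ?_) ⟨j₀, hj₀, ?_⟩)
    (by exact_mod_cast Finset.card_pos.mpr ⟨j₀, hj₀⟩)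
  · rw [hsame j hj, if_congr (hY j hj _) rfl rfl, if_congr (hY j hj _) rfl rfl]
    gcongr
    exact Nat.le_add_right _ _
  · rw [hsame j₀ hj₀, if_congr (hY j₀ hj₀ _) rfl rfl, if_congr (hY j₀ hj₀ _) rfl rfl,
      if_pos huj₀]
    have : (0 : ℝ) < (S j₀).card := by exact_mod_cast Finset.card_pos.mpr ⟨u, huj₀⟩
    gcongr
    exact Nat.lt_succ_self _

section Completion

variable (VR : Finset ℕ) (ER : Finset (ℕ × ℕ)) (d : ℕ → ℕ)

def fresh (v t : ℕ) : ℕ := VR.sup id + 1 + Nat.pair v t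

variable {VR} in
lemma lt_fresh {v : ℕ} (hv : v ∈ VR) (w t : ℕ) : v < fresh VR w t :=
  (Nat.lt_succ_of_le (Finset.le_sup (f := id) hv)).trans_le (Nat.le_add_right _ _)

lemma fresh_notMem (w t : ℕ) : fresh VR w t ∉ VR :=
  fun h => (lt_fresh h w t).false

lemma fresh_inj {v t w s : ℕ} (h : fresh VR v t = fresh VR w s) : v = w ∧ t = s :=
  Nat.pair_eq_pair.mp (Nat.add_left_cancel h)

def stubs : Finset (ℕ × ℕ) :=
  VR.biUnion fun v => (Finset.range (d v - dRec ER v)).image (Prod.mk v)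

lemma mem_stubs {p : ℕ × ℕ} : p ∈ stubs VR ER d ↔ p.1 ∈ VR ∧ p.2 < d p.1 - dRec ER p.1 := by
  obtain ⟨v, t⟩ := p
  simp only [stubs, Finset.mem_biUnion, Finset.mem_image, Finset.mem_range, Prod.mk.injEq]
  constructor
  · rintro ⟨a, ha, t', ht', rfl, rfl⟩
    exact ⟨ha, ht'⟩
  · rintro ⟨hv, ht⟩
    exact ⟨v, hv, t, ht, rfl, rfl⟩

def pendantEdges : Edges := (stubs VR ER d).image fun p => s(p.1, fresh VR p.1 p.2)

def completionEdges : Edges := uRec ER ∪ pendantEdges VR ER d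

def completionVerts : Finset ℕ := VR ∪ (stubs VR ER d).image fun p => fresh VR p.1 p.2

variable {VR ER d}

lemma mem_of_mem_uRec (hER : ∀ p ∈ ER, p.1 ∈ VR ∧ p.2 ∈ VR ∧ p.1 ≠ p.2)
    {e : Sym2 ℕ} (he : e ∈ uRec ER) {v : ℕ} (hv : v ∈ e) : v ∈ VR := by
  obtain ⟨p, hp, rfl⟩ := Finset.mem_image.mp he
  rcases Sym2.mem_iff.mp hv with rfl | rfl
  exacts [(hER p hp).1, (hER p hp).2.1]

lemma filter_mem_pendantEdges {v : ℕ} (hv : v ∈ VR) :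
    (pendantEdges VR ER d).filter (v ∈ ·)
      = (Finset.range (d v - dRec ER v)).image fun t => s(v, fresh VR v t) := by
  ext e
  simp only [pendantEdges, Finset.mem_filter, Finset.mem_image, Finset.mem_range]
  constructor
  · rintro ⟨⟨⟨w, t⟩, hp, rfl⟩, hve⟩
    rw [mem_stubs] at hp
    rcases Sym2.mem_iff.mp hve with rfl | h
    · exact ⟨t, hp.2, rfl⟩
    · exact absurd h (lt_fresh hv w t).ne
  · rintro ⟨t, ht, rfl⟩
    exact ⟨⟨(v, t), (mem_stubs VR ER d).mpr ⟨hv, ht⟩, rfl⟩, Sym2.mem_mk_left _ _⟩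

lemma degE_pendantEdges {v : ℕ} (hv : v ∈ VR) :
    degE (pendantEdges VR ER d) v = d v - dRec ER v := by
  rw [degE, filter_mem_pendantEdges hv, Finset.card_image_of_injective _ fun a b hab => ?_,
    Finset.card_range]
  rcases Sym2.eq_iff.mp hab with ⟨-, h⟩ | ⟨h, -⟩
  · exact (fresh_inj VR h).2
  · exact absurd h (lt_fresh hv v b).ne

lemma degE_completionEdges (hER : ∀ p ∈ ER, p.1 ∈ VR ∧ p.2 ∈ VR ∧ p.1 ≠ p.2)
    (hd : ∀ k ∈ VR, dRec ER k ≤ d k) {v : ℕ} (hv : v ∈ VR) :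
    degE (completionEdges VR ER d) v = d v := by
  have hdisj : Disjoint (uRec ER) (pendantEdges VR ER d) := by
    refine Finset.disjoint_left.mpr fun e he he' => ?_
    obtain ⟨⟨w, t⟩, -, rfl⟩ := Finset.mem_image.mp he'
    exact fresh_notMem VR w t (mem_of_mem_uRec hER he (Sym2.mem_mk_right _ _))
  rw [completionEdges, degE, Finset.filter_union,
    Finset.card_union_of_disjoint (Finset.disjoint_filter_filter hdisj), ← degE, ← degE,
    degE_pendantEdges hv]
  exact Nat.add_sub_cancel' (hd v hv)

lemma eq_of_mem_completionEdges_fresh (hER : ∀ p ∈ ER, p.1 ∈ VR ∧ p.2 ∈ VR ∧ p.1 ≠ p.2)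
    {x w t : ℕ} (h : s(x, fresh VR w t) ∈ completionEdges VR ER d) : x = w := by
  rcases Finset.mem_union.mp h with h | h
  · exact absurd (mem_of_mem_uRec hER h (Sym2.mem_mk_right _ _)) (fresh_notMem VR w t)
  · obtain ⟨⟨w', t'⟩, hp, he⟩ := Finset.mem_image.mp h
    rcases Sym2.eq_iff.mp he with ⟨h1, h2⟩ | ⟨h1, -⟩
    · exact h1.symm.trans (fresh_inj VR h2).1
    · exact absurd (h1 ▸ ((mem_stubs VR ER d).mp hp).1) (fresh_notMem VR w t)

lemma forall_mem_completionEdges {P : Sym2 ℕ → Prop} (hrec : ∀ p ∈ ER, P s(p.1, p.2))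
    (hpend : ∀ p ∈ stubs VR ER d, P s(p.1, fresh VR p.1 p.2)) :
    ∀ e ∈ completionEdges VR ER d, P e := by
  intro e he
  rcases Finset.mem_union.mp he with he | he <;> obtain ⟨p, hp, rfl⟩ := Finset.mem_image.mp he
  exacts [hrec p hp, hpend p hp]

theorem compat_completion (hER : ∀ p ∈ ER, p.1 ∈ VR ∧ p.2 ∈ VR ∧ p.1 ≠ p.2)
    (hd : ∀ k ∈ VR, dRec ER k ≤ d k) {ZR Z : ℕ → Bool} (hZ : ∀ x ∈ VR, Z x = ZR x) :
    Compat VR ER d ZR (completionVerts VR ER d) (completionEdges VR ER d) Z where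
  loopless := forall_mem_completionEdges (fun p hp => (hER p hp).2.2)
    fun p hp => (lt_fresh ((mem_stubs VR ER d).mp hp).1 _ _).ne
  vr_subset := Finset.subset_union_left
  edges_subset := forall_mem_completionEdges
    (fun p hp v hv =>
      Finset.mem_union_left _ (mem_of_mem_uRec hER (Finset.mem_image_of_mem _ hp) hv))
    fun p hp v hv => by
      rcases Sym2.mem_iff.mp hv with rfl | rfl
      · exact Finset.mem_union_left _ ((mem_stubs VR ER d).mp hp).1
      · exact Finset.mem_union_right _ (Finset.mem_image_of_mem _ hp)
  er_subset p hp := Finset.mem_union_left _ (Finset.mem_image_of_mem _ hp)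
  trait_agree := hZ
  covered v hv hvR := by
    obtain ⟨p, hp, rfl⟩ := Finset.mem_image.mp ((Finset.mem_union.mp hv).resolve_left hvR)
    exact ⟨p.1, ((mem_stubs VR ER d).mp hp).1,
      Sym2.eq_swap ▸ Finset.mem_union_right _ (Finset.mem_image_of_mem _ hp)⟩
  no_unsampled_edge := forall_mem_completionEdges
    (fun p hp => ⟨p.1, Sym2.mem_mk_left _ _, (hER p hp).1⟩)
    fun p hp => ⟨p.1, Sym2.mem_mk_left _ _, ((mem_stubs VR ER d).mp hp).1⟩
  degree_eq _ hv := degE_completionEdges hER hd hv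

end Completion

theorem prefrec_not_point_identified_general
    (VR M : Finset ℕ) (ER : Finset (ℕ × ℕ)) (d : ℕ → ℕ) (ZR : ℕ → Bool) (r : ℕ → ℕ)
    (hER : ∀ p ∈ ER, p.1 ∈ VR ∧ p.2 ∈ VR ∧ p.1 ≠ p.2)
    -- seeds are not recruited
    (hseed : ∀ j ∈ M, ∀ a, (a, j) ∉ ER)
    -- every non-seed `j` has the unique recruiter `r j`
    (hrec : ∀ j ∈ VR \ M, (r j, j) ∈ ER ∧ ∀ a, (a, j) ∈ ER → a = r j)
    (hd : ∀ k ∈ VR, dRec ER k ≤ d k)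
    (i k : ℕ) (hik : (i, k) ∈ ER) (hdi : dRec ER i < d i) :
    ∃ (VSU₁ : Finset ℕ) (ESU₁ : Edges) (Z₁ : ℕ → Bool)
      (VSU₂ : Finset ℕ) (ESU₂ : Edges) (Z₂ : ℕ → Bool),
      Compat VR ER d ZR VSU₁ ESU₁ Z₁ ∧
      Compat VR ER d ZR VSU₂ ESU₂ Z₂ ∧
      prefRec VSU₁ VR M ESU₁ Z₁ r ≠ prefRec VSU₂ VR M ESU₂ Z₂ r := by
  obtain ⟨hi, hk, -⟩ := hER _ hik
  have hkM : k ∈ VR \ M := Finset.mem_sdiff.mpr ⟨hk, fun h => hseed k h i hik⟩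
  have hrk : r k = i := ((hrec k hkM).2 i hik).symm
  have hstub : (i, 0) ∈ stubs VR ER d := (mem_stubs VR ER d).mpr ⟨hi, Nat.sub_pos_of_lt hdi⟩
  set u := fresh VR i 0
  have hu : u ∉ VR := fresh_notMem VR i 0
  have hZ (b : Bool) : ∀ x ∈ VR, update ZR u b x = ZR x :=
    fun x hx => update_of_ne (ne_of_mem_of_not_mem hx hu) _ _
  have huS : u ∈ Ssusc (completionVerts VR ER d) VR M (completionEdges VR ER d) (r k) k := by
    rw [hrk]
    exact Finset.mem_filter.mpr ⟨Finset.mem_union_right _ (Finset.mem_image_of_mem _ hstub),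
      Finset.mem_union_right _ (Finset.mem_image_of_mem _ hstub), Or.inl hu⟩
  refine ⟨_, _, update ZR u (ZR i), _, _, update ZR u (!ZR i),
    compat_completion hER hd (hZ _), compat_completion hER hd (hZ _), ?_⟩
  exact (prefRec_update_lt ZR hu (fun j hj => (hER _ (hrec j hj).1).1)
    (fun _ hx => eq_of_mem_completionEdges_fresh hER hx) hkM huS).ne

/-- If some `i ∈ V_R` with unused degree (`d_i > d_i^r`) recruited at
least one other vertex, then the subgraph preferential recruitment is not point identified:
there are two compatible pairs whose preferential recruitment values differ. -/
theorem prefrec_not_point_identified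
    (VR M : Finset ℕ) (ER : Finset (ℕ × ℕ)) (d : ℕ → ℕ) (ZR : ℕ → Bool) (r : ℕ → ℕ)
    (hM : M ⊆ VR)
    (hER : ∀ p ∈ ER, p.1 ∈ VR ∧ p.2 ∈ VR ∧ p.1 ≠ p.2)
    -- seeds are not recruited
    (hseed : ∀ j ∈ M, ∀ a, (a, j) ∉ ER)
    -- every non-seed `j` has the unique recruiter `r j`
    (hrec : ∀ j ∈ VR \ M, (r j, j) ∈ ER ∧ ∀ a, (a, j) ∈ ER → a = r j)
    (hd : ∀ k ∈ VR, dRec ER k ≤ d k)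
    (i k : ℕ) (hi : i ∈ VR) (hik : (i, k) ∈ ER) (hdi : dRec ER i < d i) :
    ∃ (VSU₁ : Finset ℕ) (ESU₁ : Edges) (Z₁ : ℕ → Bool)
      (VSU₂ : Finset ℕ) (ESU₂ : Edges) (Z₂ : ℕ → Bool),
      Compat VR ER d ZR VSU₁ ESU₁ Z₁ ∧
      Compat VR ER d ZR VSU₂ ESU₂ Z₂ ∧
      prefRec VSU₁ VR M ESU₁ Z₁ r ≠ prefRec VSU₂ VR M ESU₂ Z₂ r :=
  prefrec_not_point_identified_general VR M ER d ZR r hER hseed hrec hd i k hik hdi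

end RDS
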